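/- arXiv:1111.1814 — 3 statements merged into one kernel-verified Lean document; each statement's English description precedes it below -/
import Mathlib

section
/- Let G be a finite simple connected split graph, i.e., V(G) = V_1 ∪ V_2 where V_1 induces a clique and V_2 induces an independent set, and let R ⊆ V(G) be nonempty. Let G' be the graph obtained from G by adding two new nonadjacent vertices s and t, each made adjacent to every vertex of R. Then G' has chordality at most 5, i.e., G' contains no induced cycle of length at least 6. -/
open SimpleGraph

/-- A walk avoids a set `S` if none of its vertices lies in `S`. -/
def WalkAvoids {V : Type*} {G : SimpleGraph V} {u v : V} (p : G.Walk u v) (S : Set V) : Prop :=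
  ∀ w ∈ p.support, w ∉ S

/-- `S` is an `(s,t)`-vertex separator: `s, t ∉ S` and every walk from `s` to `t` meets `S`. -/
def IsSep {V : Type*} (G : SimpleGraph V) (s t : V) (S : Set V) : Prop :=
  s ∉ S ∧ t ∉ S ∧ ∀ p : G.Walk s t, ∃ w ∈ p.support, w ∈ S

/-- A connected `(s,t)`-vertex separator. -/
def IsConnSep {V : Type*} (G : SimpleGraph V) (s t : V) (S : Set V) : Prop :=
  IsSep G s t S ∧ (G.induce S).Connected

/-- A minimal `(s,t)`-vertex separator: no proper subset is a separator. -/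
def IsMinimalSep {V : Type*} (G : SimpleGraph V) (s t : V) (S : Set V) : Prop :=
  IsSep G s t S ∧ ∀ S' ⊂ S, ¬ IsSep G s t S'

/-- The connected component of `s` in `G − S`, as the set of vertices reachable
from `s` by walks avoiding `S`. -/
def CompOf {V : Type*} (G : SimpleGraph V) (S : Set V) (s : V) : Set V :=
  {v | ∃ p : G.Walk s v, WalkAvoids p S}

/-- `G` has chordality at most `c`: it contains no induced cycle of length at least `c+1`. -/
def ChordalityAtMost {V : Type*} (G : SimpleGraph V) (c : ℕ) : Prop :=
  ∀ n, c + 1 ≤ n → IsEmpty (cycleGraph n ↪g G)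

/-- The graph `G'` obtained from `G` by adding two new nonadjacent vertices
`s = Sum.inr false` and `t = Sum.inr true`, each made adjacent to every vertex of `R`. -/
def TermExt {V : Type*} (G : SimpleGraph V) (R : Set V) : SimpleGraph (V ⊕ Bool) :=
  SimpleGraph.fromRel (fun a b =>
    match a, b with
    | Sum.inl u, Sum.inl v => G.Adj u v
    | Sum.inl y, Sum.inr _ => y ∈ R
    | _, _ => False)

/-!
A split graph contains no induced `2K₂`: each of two edges has an endpoint in the clique, and
these endpoints are adjacent. An induced cycle of length at least `6` contains an induced `2K₂`
avoiding any prescribed vertex, so it must leave `G` at two vertices, i.e. pass through both `s`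
and `t`. But `s` and `t` have the same neighbourhood, and two such twins cannot both lie on an
induced cycle of length at least `5`.
-/

open SimpleGraph

section Split

variable {W : Type*} {H : SimpleGraph W} {A B : Set W}

lemma mem_or_mem_of_adj_of_isIndepSet (hB : H.IsIndepSet B) {x y : W} (hxy : H.Adj x y)
    (hx : x ∈ A ∪ B) (hy : y ∈ A ∪ B) : x ∈ A ∨ y ∈ A := by
  by_contra! h
  exact hB (hx.resolve_left h.1) (hy.resolve_left h.2) hxy.ne hxy

/-- Split graphs are `2K₂`-free. -/
lemma adj_between_edges_of_isClique_of_isIndepSet (hA : H.IsClique A) (hB : H.IsIndepSet B)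
    {a b c d : W} (ha : a ∈ A ∪ B) (hb : b ∈ A ∪ B) (hc : c ∈ A ∪ B) (hd : d ∈ A ∪ B)
    (hab : H.Adj a b) (hcd : H.Adj c d) :
    H.Adj a c ∨ H.Adj a d ∨ H.Adj b c ∨ H.Adj b d := by
  by_contra! h
  obtain ⟨hac, had, hbc, hbd⟩ := h
  rcases mem_or_mem_of_adj_of_isIndepSet hB hab ha hb with ha | hb <;>
    rcases mem_or_mem_of_adj_of_isIndepSet hB hcd hc hd with hc | hd
  · exact hac (hA ha hc (by rintro rfl; exact hbc hab.symm))
  · exact had (hA ha hd (by rintro rfl; exact hbd hab.symm))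
  · exact hbc (hA hb hc (by rintro rfl; exact hac hab))
  · exact hbd (hA hb hd (by rintro rfl; exact had hab))

end Split

section CycleGraph

variable {W : Type*} {H : SimpleGraph W}

lemma cycleGraph_adj_add_add {n : ℕ} (a x y : Fin (n + 2)) :
    (cycleGraph (n + 2)).Adj (a + x) (a + y) ↔ (cycleGraph (n + 2)).Adj x y := by
  simp only [cycleGraph_adj, add_sub_add_left_eq_sub]

lemma eq_of_neighborSet_eq_of_cycleGraph_embedding {n : ℕ} (f : cycleGraph (n + 5) ↪g H)
    {a b : Fin (n + 5)} (h : H.neighborSet (f a) = H.neighborSet (f b)) : a = b := by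
  have hb : ∀ c, (cycleGraph (n + 5)).Adj a c → (cycleGraph (n + 5)).Adj b c := fun c hc => by
    have hc' : f c ∈ H.neighborSet (f a) := f.map_adj_iff.mpr hc
    rw [h] at hc'
    exact f.map_adj_iff.mp hc'
  have h₁ := hb (a + 1) (by rw [cycleGraph_adj]; grind)
  have h₂ := hb (a - 1) (by rw [cycleGraph_adj]; grind)
  rw [cycleGraph_adj] at h₁ h₂
  by_contra hab
  -- otherwise `b = a + 2 = a - 2`, so `4 = 0` in `Fin (n + 5)`
  have h₄ : (4 : Fin (n + 5)) ≠ 0 := by simp (disch := omega) [Fin.ext_iff, Nat.mod_eq_of_lt]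
  grind

lemma exists_ne_notMem_union_of_cycleGraph_embedding {A B : Set W} (hA : H.IsClique A)
    (hB : H.IsIndepSet B) {n : ℕ} (f : cycleGraph (n + 6) ↪g H) (a : Fin (n + 6)) :
    ∃ k ≠ a, f k ∉ A ∪ B := by
  by_contra! h
  have hmem : ∀ i : Fin (n + 6), i ≠ 0 → f (a + i) ∈ A ∪ B := fun i hi =>
    h _ (by simpa using hi)
  have hadj : ∀ i j : Fin (n + 6), H.Adj (f (a + i)) (f (a + j)) ↔ (cycleGraph (n + 6)).Adj i j :=
    fun i j => f.map_adj_iff.trans (cycleGraph_adj_add_add a i j)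
  have hne : (1 : Fin (n + 6)) ≠ 0 ∧ (2 : Fin (n + 6)) ≠ 0 ∧ (4 : Fin (n + 6)) ≠ 0 ∧
      (5 : Fin (n + 6)) ≠ 0 := by
    simp (disch := omega) [Fin.ext_iff, Nat.mod_eq_of_lt]
  have hcyc : (cycleGraph (n + 6)).Adj 1 2 ∧ (cycleGraph (n + 6)).Adj 4 5 ∧
      ¬ (cycleGraph (n + 6)).Adj 1 4 ∧ ¬ (cycleGraph (n + 6)).Adj 1 5 ∧
      ¬ (cycleGraph (n + 6)).Adj 2 4 ∧ ¬ (cycleGraph (n + 6)).Adj 2 5 := by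
    simp (disch := omega) [cycleGraph_adj', Fin.sub_def, Nat.mod_eq_of_lt, Nat.mod_eq_sub_mod]
  have := adj_between_edges_of_isClique_of_isIndepSet hA hB (hmem 1 hne.1) (hmem 2 hne.2.1)
    (hmem 4 hne.2.2.1) (hmem 5 hne.2.2.2) ((hadj 1 2).2 hcyc.1) ((hadj 4 5).2 hcyc.2.1)
  simp only [hadj] at this
  tauto

end CycleGraph

section TermExt

variable {V : Type*} {G : SimpleGraph V} {R : Set V}

lemma termExt_adj_inl_inl {u v : V} :
    (TermExt G R).Adj (Sum.inl u) (Sum.inl v) ↔ G.Adj u v := by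
  simp only [TermExt, fromRel_adj, ne_eq, Sum.inl.injEq, G.adj_comm v u, or_self]
  exact ⟨And.right, fun h => ⟨h.ne, h⟩⟩

lemma termExt_neighborSet_of_notMem_range_inl {x : V ⊕ Bool} (hx : x ∉ Set.range Sum.inl) :
    (TermExt G R).neighborSet x = Sum.inl '' R := by
  rcases x with u | b
  · exact absurd ⟨u, rfl⟩ hx
  · ext (y | c) <;> simp [TermExt]

lemma isClique_image_inl_termExt {s : Set V} (hs : G.IsClique s) :
    (TermExt G R).IsClique (Sum.inl '' s) := by
  rintro _ ⟨u, hu, rfl⟩ _ ⟨v, hv, rfl⟩ huv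
  exact termExt_adj_inl_inl.mpr (hs hu hv (ne_of_apply_ne _ huv))

lemma isIndepSet_image_inl_termExt {s : Set V} (hs : G.IsIndepSet s) :
    (TermExt G R).IsIndepSet (Sum.inl '' s) := by
  rintro _ ⟨u, hu, rfl⟩ _ ⟨v, hv, rfl⟩ huv
  rw [termExt_adj_inl_inl]
  exact hs hu hv (ne_of_apply_ne _ huv)

/-- Since `s` and `t` are twins, an induced cycle of length at least `5` meets at most one
of them. -/
lemma exists_forall_ne_mem_range_inl {n : ℕ} (f : cycleGraph (n + 5) ↪g TermExt G R) :
    ∃ a, ∀ k ≠ a, f k ∈ Set.range Sum.inl := by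
  by_cases h : ∀ k, f k ∈ Set.range Sum.inl
  · exact ⟨0, fun k _ => h k⟩
  obtain ⟨a, ha⟩ := not_forall.mp h
  refine ⟨a, fun k hka => by_contra fun hk => hka ?_⟩
  refine eq_of_neighborSet_eq_of_cycleGraph_embedding f ?_
  rw [termExt_neighborSet_of_notMem_range_inl hk, termExt_neighborSet_of_notMem_range_inl ha]

end TermExt

theorem stmt4_general {V : Type*} (G : SimpleGraph V)
    (V1 V2 : Set V) (hcover : V1 ∪ V2 = Set.univ)
    (hclique : G.IsClique V1) (hindep : ∀ u ∈ V2, ∀ v ∈ V2, ¬ G.Adj u v)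
    (R : Set V) :
    ChordalityAtMost (TermExt G R) 5 := by
  intro n hn
  obtain ⟨m, rfl⟩ : ∃ m, n = m + 6 := ⟨n - 6, by omega⟩
  refine ⟨fun f => ?_⟩
  obtain ⟨a, ha⟩ := exists_forall_ne_mem_range_inl f
  obtain ⟨k, hka, hk⟩ := exists_ne_notMem_union_of_cycleGraph_embedding
    (isClique_image_inl_termExt hclique)
    (isIndepSet_image_inl_termExt fun u hu v hv _ => hindep u hu v hv) f a
  rw [← Set.image_union, hcover, Set.image_univ] at hk
  exact hk (ha k hka)

theorem stmt4 {V : Type*} [Fintype V] (G : SimpleGraph V) (hG : G.Connected)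
    (V1 V2 : Set V) (hcover : V1 ∪ V2 = Set.univ)
    (hclique : G.IsClique V1) (hindep : ∀ u ∈ V2, ∀ v ∈ V2, ¬ G.Adj u v)
    (R : Set V) (hR : R.Nonempty) :
    ChordalityAtMost (TermExt G R) 5 :=
  stmt4_general G V1 V2 hcover hclique hindep R
end

section
/- Let G be a finite simple connected graph with a nonempty terminal set R ⊆ V(G), and let G' be the graph obtained from G by adding two new nonadjacent vertices s and t, each made adjacent to every vertex of R. Then G has a Steiner tree for terminal set R with at most r edges (equivalently, there is a set W ⊆ V(G) with R ⊆ W, |W| ≤ r+1, such that the subgraph of G induced on W is connected) if and only if G' has a connected (s,t)-vertex separator with at most r+1 vertices. -/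
open SimpleGraph

/-!
The new vertices `s` and `t` are both adjacent to exactly `R`. Hence a vertex set avoiding
`s` and `t` is a set `inl '' W` of old vertices, and it separates `s` from `t` iff `R ⊆ W`:
every `s`–`t` walk enters `R` in its first step, while `s, x, t` is a walk for each `x ∈ R`.
Since `inl` embeds `G` as an induced subgraph, `inl '' W` is connected iff `G[W]` is, and
both sets have the same size.
-/

lemma Set.image_inl_preimage_inl_eq {α β : Type*} {S : Set (α ⊕ β)} (h : ∀ b, Sum.inr b ∉ S) :
    Sum.inl '' (Sum.inl ⁻¹' S) = S := by
  refine Set.image_preimage_eq_iff.mpr ?_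
  rintro (a | b) hx
  exacts [⟨a, rfl⟩, absurd hx (h b)]

namespace TermExt

variable {V : Type*} (G : SimpleGraph V) (R : Set V)

lemma adj_inl_inl (u v : V) :
    (TermExt G R).Adj (Sum.inl u) (Sum.inl v) ↔ G.Adj u v := by
  simp only [TermExt, fromRel_adj]
  constructor
  · rintro ⟨-, h | h⟩
    exacts [h, h.symm]
  · exact fun h => ⟨by simp [h.ne], Or.inl h⟩

lemma adj_inr (b : Bool) (x : V ⊕ Bool) :
    (TermExt G R).Adj (Sum.inr b) x ↔ ∃ y ∈ R, x = Sum.inl y := by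
  cases x <;> simp [TermExt]

noncomputable def induceImageInlIso (W : Set V) :
    G.induce W ≃g (TermExt G R).induce (Sum.inl '' W) where
  toEquiv := Equiv.Set.image Sum.inl W Sum.inl_injective
  map_rel_iff' := by
    intro a b
    simp [Equiv.Set.image, Equiv.Set.imageOfInjOn, adj_inl_inl]

lemma isSep_image_inl_iff (W : Set V) :
    IsSep (TermExt G R) (Sum.inr false) (Sum.inr true) (Sum.inl '' W) ↔ R ⊆ W := by
  refine ⟨fun ⟨_, _, hsep⟩ x hx => ?_, fun hRW => ⟨by simp, by simp, ?_⟩⟩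
  · have hs : (TermExt G R).Adj (Sum.inr false) (Sum.inl x) := (adj_inr G R _ _).mpr ⟨x, hx, rfl⟩
    have ht : (TermExt G R).Adj (Sum.inl x) (Sum.inr true) :=
      ((adj_inr G R _ _).mpr ⟨x, hx, rfl⟩).symm
    obtain ⟨w, hw, y, hy, rfl⟩ := hsep (.cons hs (.cons ht .nil))
    simp only [Walk.support_cons, Walk.support_nil, List.mem_cons,
      reduceCtorEq, Sum.inl.injEq, List.not_mem_nil, or_false, false_or] at hw
    exact hw ▸ hy
  · rintro (_ | ⟨h, -⟩)
    obtain ⟨y, hy, rfl⟩ := (adj_inr G R _ _).mp h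
    exact ⟨Sum.inl y, by simp, y, hRW hy, rfl⟩

lemma isConnSep_image_inl_iff (W : Set V) :
    IsConnSep (TermExt G R) (Sum.inr false) (Sum.inr true) (Sum.inl '' W) ↔
      R ⊆ W ∧ (G.induce W).Connected := by
  rw [IsConnSep, isSep_image_inl_iff, (induceImageInlIso G R W).connected_iff]

end TermExt

theorem stmt5_general {V : Type*} (G : SimpleGraph V)
    (R : Set V) (r : ℕ) :
    (∃ W : Set V, R ⊆ W ∧ W.ncard ≤ r + 1 ∧ (G.induce W).Connected) ↔
    (∃ S : Set (V ⊕ Bool),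
      IsConnSep (TermExt G R) (Sum.inr false) (Sum.inr true) S ∧ S.ncard ≤ r + 1) := by
  constructor
  · rintro ⟨W, hRW, hcard, hconn⟩
    refine ⟨Sum.inl '' W, (TermExt.isConnSep_image_inl_iff G R W).mpr ⟨hRW, hconn⟩, ?_⟩
    rwa [Set.ncard_image_of_injective W Sum.inl_injective]
  · rintro ⟨S, hS, hcard⟩
    have hSW : Sum.inl '' (Sum.inl ⁻¹' S) = S :=
      Set.image_inl_preimage_inl_eq (Bool.forall_bool.mpr ⟨hS.1.1, hS.1.2.1⟩)
    rw [← hSW, Set.ncard_image_of_injective _ Sum.inl_injective] at hcard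
    rw [← hSW, TermExt.isConnSep_image_inl_iff] at hS
    exact ⟨_, hS.1, hcard, hS.2⟩

theorem stmt5 {V : Type*} [Fintype V] (G : SimpleGraph V) (hG : G.Connected)
    (R : Set V) (hR : R.Nonempty) (r : ℕ) :
    (∃ W : Set V, R ⊆ W ∧ W.ncard ≤ r + 1 ∧ (G.induce W).Connected) ↔
    (∃ S : Set (V ⊕ Bool),
      IsConnSep (TermExt G R) (Sum.inr false) (Sum.inr true) S ∧ S.ncard ≤ r + 1) :=
  stmt5_general G R r
end

section
/- Let G be a finite simple graph of chordality c (c ≥ 3), let s and t be nonadjacent distinct vertices, and let S be a minimal (s,t)-vertex separator with C_s and C_t the connected components of G − S containing s and t respectively. Then for every pair of nonadjacent vertices u, v ∈ S, there exists a u–v path in G of length at most ⌈c/2⌉ all of whose internal vertices lie in C_s, or a u–v path in G of length at most ⌈c/2⌉ all of whose internal vertices lie in C_t. -/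
open SimpleGraph

/-!
Let `P` and `Q` be shortest `u`–`v` paths with interior in `C_s` and in `C_t` respectively; they
exist because every vertex of a minimal separator has a neighbour in both full components.
A shortest path has no chords, there is no edge between `C_s` and `C_t`, and `u`, `v` are
nonadjacent, so `P` followed by `Q` reversed is an induced cycle. Chordality bounds its length
`|P| + |Q|` by `c`, so the shorter of the two paths has length at most `c / 2`.
-/

namespace SimpleGraph

variable {V : Type*} {G : SimpleGraph V}

theorem cycleGraph_adj_iff_val_eq_mod {n : ℕ} {i j : Fin (n + 2)} :
    (cycleGraph (n + 2)).Adj i j ↔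
      j.val = (i.val + 1) % (n + 2) ∨ i.val = (j.val + 1) % (n + 2) := by
  rw [cycleGraph_adj, sub_eq_iff_eq_add', sub_eq_iff_eq_add', Fin.ext_iff, Fin.ext_iff,
    Fin.val_add, Fin.val_add, Fin.val_one, add_comm (i.val), add_comm (j.val)]
  tauto

namespace Walk

variable {u v w : V}

theorem getVert_succ_mod_length {p : G.Walk u u} {k : ℕ} (hk : k < p.length) :
    p.getVert ((k + 1) % p.length) = p.getVert (k + 1) := by
  by_cases hlt : k + 1 < p.length
  · rw [Nat.mod_eq_of_lt hlt]
  · rw [show k + 1 = p.length by omega, Nat.mod_self, getVert_zero, getVert_length]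

theorem IsCycle.nonempty_cycleGraph_embedding {p : G.Walk u u} (hp : p.IsCycle)
    (hpc : p.IsChordless) : Nonempty (cycleGraph p.length ↪g G) := by
  obtain ⟨n, hn⟩ : ∃ n, p.length = n + 2 := ⟨p.length - 2, by have := hp.three_le_length; omega⟩
  have hinj {i j : ℕ} (hi : i < p.length) (hj : j < p.length)
      (h : p.getVert i = p.getVert j) : i = j :=
    hp.getVert_injOn' (by rw [Set.mem_ofPred_eq]; omega) (by rw [Set.mem_ofPred_eq]; omega) h
  have hmod (k : ℕ) : (k + 1) % p.length < p.length := Nat.mod_lt _ (by omega)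
  have hadj (i j : ℕ) (hi : i < p.length) (hj : j < p.length) :
      G.Adj (p.getVert i) (p.getVert j) ↔
        j = (i + 1) % p.length ∨ i = (j + 1) % p.length := by
    constructor
    · intro h
      obtain ⟨k, hk, he⟩ := p.mk_mem_edges_iff_exists.mp
        (hpc.mem_edges (p.getVert_mem_support _) (p.getVert_mem_support _) h)
      rw [← getVert_succ_mod_length hk, Sym2.eq_iff] at he
      rcases he with ⟨h1, h2⟩ | ⟨h1, h2⟩
      · left
        rw [← hinj hk hi h1]
        exact (hinj (hmod k) hj h2).symm
      · right
        rw [← hinj hk hj h1]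
        exact (hinj (hmod k) hi h2).symm
    · rintro (rfl | rfl)
      · rw [getVert_succ_mod_length hi]
        exact p.adj_getVert_succ hi
      · rw [getVert_succ_mod_length hj]
        exact (p.adj_getVert_succ hj).symm
  rw [hn] at hinj hadj ⊢
  refine ⟨⟨⟨fun i => p.getVert i, fun i j h => Fin.ext (hinj i.isLt j.isLt h)⟩, ?_⟩⟩
  intro i j
  rw [cycleGraph_adj_iff_val_eq_mod]
  exact hadj i j i.isLt j.isLt

theorem IsChordless.reverse {p : G.Walk u v} (hp : p.IsChordless) : p.reverse.IsChordless := by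
  rw [isChordless_iff_forall_mem_edges] at hp ⊢
  simp only [support_reverse, edges_reverse, List.mem_reverse]
  exact hp

theorem IsChordless.append {p : G.Walk u v} {q : G.Walk v w} (hp : p.IsChordless)
    (hq : q.IsChordless)
    (hpq : ∀ a ∈ p.support, ∀ b ∈ q.support, G.Adj a b → a ∈ q.support ∨ b ∈ p.support) :
    (p.append q).IsChordless := by
  rw [isChordless_iff_forall_mem_edges]
  have key {a b : V} (ha : a ∈ p.support) (hb : b ∈ q.support) (hab : G.Adj a b) :
      s(a, b) ∈ (p.append q).edges := by
    rw [edges_append, List.mem_append]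
    rcases hpq a ha b hb hab with ha' | hb'
    · exact .inr (hq.mem_edges ha' hb hab)
    · exact .inl (hp.mem_edges ha hb' hab)
  intro a b ha hb hab
  rw [mem_support_append_iff] at ha hb
  rcases ha with ha | ha <;> rcases hb with hb | hb
  · exact edges_append p q ▸ List.mem_append_left _ (hp.mem_edges ha hb hab)
  · exact key ha hb hab
  · exact Sym2.eq_swap ▸ key hb ha hab.symm
  · exact edges_append p q ▸ List.mem_append_right _ (hq.mem_edges ha hb hab)

theorem isChordless_of_forall_length_le {X : Set V} {p : G.Walk u v}
    (hpX : ∀ x ∈ p.support, x ∈ X)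
    (hmin : ∀ q : G.Walk u v, (∀ x ∈ q.support, x ∈ X) → p.length ≤ q.length) :
    p.IsChordless := by
  rw [isChordless_iff_forall_mem_edges]
  intro a b ha hb hab
  obtain ⟨i, rfl, hi⟩ := mem_support_iff_exists_getVert.mp ha
  obtain ⟨j, rfl, hj⟩ := mem_support_iff_exists_getVert.mp hb
  clear ha hb
  wlog hij : i ≤ j generalizing i j
  · exact Sym2.eq_swap ▸ this j hj i hi hab.symm (by omega)
  by_cases hji : j = i + 1
  · subst hji
    exact p.mk_mem_edges_iff_exists.mpr ⟨i, by omega, rfl⟩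
  have hne : i ≠ j := by
    rintro rfl
    exact hab.ne rfl
  exfalso
  let q := (p.take i).append (cons hab (p.drop j))
  have hqX : ∀ x ∈ q.support, x ∈ X := by
    intro x hx
    rw [mem_support_append_iff, support_cons, List.mem_cons] at hx
    rcases hx with hx | rfl | hx
    · exact hpX x ((p.isSubwalk_take i).support_subset hx)
    · exact hpX _ (p.getVert_mem_support _)
    · exact hpX x ((p.isSubwalk_drop j).support_subset hx)
  have := hmin q hqX
  simp only [q, length_append, length_cons, take_length, drop_length] at this
  omega

theorem exists_isPath_isChordless_of_support_subset {X : Set V} (p : G.Walk u v)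
    (hpX : ∀ x ∈ p.support, x ∈ X) :
    ∃ q : G.Walk u v, q.IsPath ∧ q.IsChordless ∧ ∀ x ∈ q.support, x ∈ X := by
  classical
  obtain ⟨q, hqX, hmin⟩ := (measure fun q : G.Walk u v => q.length).wf.has_min
    {q | ∀ x ∈ q.support, x ∈ X} ⟨p, hpX⟩
  have hbX : ∀ x ∈ q.bypass.support, x ∈ X :=
    fun x hx => hqX x (q.support_bypass_subset_support hx)
  refine ⟨q.bypass, q.bypass_isPath, isChordless_of_forall_length_le hbX fun r hr => ?_, hbX⟩
  exact q.length_bypass_le_length.trans (not_lt.mp (hmin r hr))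

theorem IsPath.isCycle_append_reverse {C D : Set V} {p q : G.Walk u v} (hp : p.IsPath)
    (hq : q.IsPath) (hpC : ∀ x ∈ p.support, x ∈ insert u (insert v C))
    (hqD : ∀ x ∈ q.support, x ∈ insert u (insert v D)) (hCD : Disjoint C D) (huv : u ≠ v)
    (hadj : ¬ G.Adj u v) : (p.append q.reverse).IsCycle := by
  have hlen : 1 < p.length := by
    have h0 : p.length ≠ 0 := fun h => huv (eq_of_length_eq_zero h)
    have h1 : p.length ≠ 1 := fun h => hadj (adj_of_length_eq_one h)
    omega
  refine hp.isCycle_append hq.reverse (List.disjoint_left.mpr fun {x} hxp hxq => ?_) (.inl hlen)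
  have hxu : x ≠ u := by
    rintro rfl
    exact (List.nodup_cons.mp (p.cons_tail_support ▸ hp.support_nodup)).1 hxp
  have hxv : x ≠ v := by
    rintro rfl
    exact (List.nodup_cons.mp (q.reverse.cons_tail_support ▸ hq.reverse.support_nodup)).1 hxq
  have hxC : x ∈ C := by
    simpa [hxu, hxv] using hpC x (List.mem_of_mem_tail hxp)
  have hxD : x ∈ D := by
    simpa [hxu, hxv] using hqD x (by simpa using List.mem_of_mem_tail hxq)
  exact Set.disjoint_left.mp hCD hxC hxD

theorem IsChordless.append_reverse {C D : Set V} {p q : G.Walk u v} (hp : p.IsChordless)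
    (hq : q.IsChordless) (hpC : ∀ x ∈ p.support, x ∈ insert u (insert v C))
    (hqD : ∀ x ∈ q.support, x ∈ insert u (insert v D))
    (hCD : ∀ a ∈ C, ∀ b ∈ D, ¬ G.Adj a b) : (p.append q.reverse).IsChordless := by
  refine hp.append hq.reverse fun a ha b hb hab => ?_
  rw [support_reverse, List.mem_reverse] at hb ⊢
  by_contra! h
  have haC : a ∈ C := by
    have := hpC a ha
    grind [start_mem_support, end_mem_support]
  have hbD : b ∈ D := by
    have := hqD b hb
    grind [start_mem_support, end_mem_support]
  exact hCD a haC b hbD hab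

end Walk
end SimpleGraph

section Separators

variable {V : Type*} {G : SimpleGraph V} {S : Set V} {r s t : V}

theorem mem_compOf_of_mem_support {v w : V} {p : G.Walk r v} (hp : WalkAvoids p S)
    (hw : w ∈ p.support) : w ∈ CompOf G S r := by
  classical
  exact ⟨p.takeUntil w hw, fun x hx => hp x (p.support_takeUntil_subset_support hw hx)⟩

theorem notMem_of_mem_compOf {v : V} (hv : v ∈ CompOf G S r) : v ∉ S := by
  obtain ⟨p, hp⟩ := hv
  exact hp v p.end_mem_support

theorem self_mem_compOf (hr : r ∉ S) : r ∈ CompOf G S r :=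
  ⟨.nil, fun w hw => by rw [Walk.support_nil, List.mem_singleton] at hw; exact hw ▸ hr⟩

theorem mem_compOf_of_adj {a b : V} (ha : a ∈ CompOf G S r) (hab : G.Adj a b) (hb : b ∉ S) :
    b ∈ CompOf G S r := by
  obtain ⟨p, hp⟩ := ha
  refine ⟨p.concat hab, fun w hw => ?_⟩
  rw [Walk.support_concat, List.mem_append, List.mem_singleton] at hw
  rcases hw with hw | rfl
  exacts [hp w hw, hb]

theorem IsSep.symm (h : IsSep G s t S) : IsSep G t s S :=
  ⟨h.2.1, h.1, fun p => by simpa using h.2.2 p.reverse⟩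

theorem IsMinimalSep.symm (h : IsMinimalSep G s t S) : IsMinimalSep G t s S :=
  ⟨h.1.symm, fun S' hS' hsep => h.2 S' hS' hsep.symm⟩

theorem IsSep.disjoint_compOf (h : IsSep G s t S) : Disjoint (CompOf G S s) (CompOf G S t) := by
  refine Set.disjoint_left.mpr fun a ⟨p, hp⟩ ⟨q, hq⟩ => ?_
  obtain ⟨w, hw, hwS⟩ := h.2.2 (p.append q.reverse)
  rw [Walk.mem_support_append_iff, Walk.support_reverse, List.mem_reverse] at hw
  rcases hw with hw | hw
  exacts [hp w hw hwS, hq w hw hwS]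

theorem IsSep.not_adj_of_mem_compOf (h : IsSep G s t S) {a b : V} (ha : a ∈ CompOf G S s)
    (hb : b ∈ CompOf G S t) : ¬ G.Adj a b := fun hab =>
  Set.disjoint_left.mp h.disjoint_compOf ha
    (mem_compOf_of_adj hb hab.symm (notMem_of_mem_compOf ha))

theorem exists_adj_mem_compOf_of_walk {a x : V} (ha : a ∈ CompOf G S r) (hx : x ∈ S)
    (p : G.Walk a x) (hp : ∀ w ∈ p.support, w ≠ x → w ∉ S) :
    ∃ b ∈ CompOf G S r, G.Adj b x := by
  induction p with
  | nil => exact absurd hx (notMem_of_mem_compOf ha)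
  | @cons a c x hac q ih =>
    by_cases hcx : c = x
    · exact ⟨a, ha, hcx ▸ hac⟩
    refine ih (mem_compOf_of_adj ha hac (hp c (by simp) hcx)) hx fun w hw => hp w ?_
    exact List.mem_cons_of_mem _ hw

/-- If `S \ {x}` no longer separates, the walk that escapes it reaches `x` from `C_s`. -/
theorem IsMinimalSep.exists_adj_mem_compOf (h : IsMinimalSep G s t S) {x : V} (hx : x ∈ S) :
    ∃ a ∈ CompOf G S s, G.Adj a x := by
  classical
  have hsep' : ¬ IsSep G s t (S \ {x}) := h.2 _ (Set.sdiff_singleton_ssubset.mpr hx)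
  simp only [IsSep, Set.mem_sdiff, h.1.1, h.1.2.1, false_and, not_false_eq_true, true_and,
    not_forall, not_exists, not_and] at hsep'
  obtain ⟨p, hp⟩ := hsep'
  have hpS : ∀ w ∈ p.support, w ≠ x → w ∉ S := fun w hw hwx hwS => hp w hw hwS hwx
  obtain ⟨w, hw, hwS⟩ := h.1.2.2 p
  obtain rfl : w = x := by_contra fun hwx => hpS w hw hwx hwS
  exact exists_adj_mem_compOf_of_walk (self_mem_compOf h.1.1) hwS (p.takeUntil w hw)
    fun y hy => hpS y (p.support_takeUntil_subset_support hw hy)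

theorem exists_walk_support_subset_of_adj_mem_compOf {u v a b : V} (hua : G.Adj u a)
    (ha : a ∈ CompOf G S r) (hbv : G.Adj b v) (hb : b ∈ CompOf G S r) :
    ∃ p : G.Walk u v, ∀ x ∈ p.support, x ∈ insert u (insert v (CompOf G S r)) := by
  obtain ⟨pa, hpa⟩ := ha
  obtain ⟨pb, hpb⟩ := hb
  refine ⟨.cons hua (pa.reverse.append (pb.concat hbv)), fun x hx => ?_⟩
  simp only [Walk.support_cons, List.mem_cons, Walk.mem_support_append_iff, Walk.support_reverse,
    List.mem_reverse, Walk.support_concat, List.mem_append, List.not_mem_nil, or_false] at hx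
  rcases hx with rfl | hx | hx | rfl
  · exact .inl rfl
  · exact .inr (.inr (mem_compOf_of_mem_support hpa hx))
  · exact .inr (.inr (mem_compOf_of_mem_support hpb hx))
  · exact .inr (.inl rfl)

theorem IsMinimalSep.exists_isPath_isChordless (h : IsMinimalSep G s t S) {u v : V}
    (hu : u ∈ S) (hv : v ∈ S) :
    ∃ p : G.Walk u v, p.IsPath ∧ p.IsChordless ∧
      ∀ x ∈ p.support, x ∈ insert u (insert v (CompOf G S s)) := by
  obtain ⟨a, ha, hau⟩ := h.exists_adj_mem_compOf hu
  obtain ⟨b, hb, hbv⟩ := h.exists_adj_mem_compOf hv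
  obtain ⟨p, hp⟩ := exists_walk_support_subset_of_adj_mem_compOf hau.symm ha hbv hb
  exact Walk.exists_isPath_isChordless_of_support_subset p hp

end Separators

theorem ChordalityAtMost.length_le {V : Type*} {G : SimpleGraph V} {c : ℕ}
    (h : ChordalityAtMost G c) {u : V} {p : G.Walk u u} (hp : p.IsCycle) (hpc : p.IsChordless) :
    p.length ≤ c := by
  by_contra! hlt
  obtain ⟨e⟩ := hp.nonempty_cycleGraph_embedding hpc
  exact (h _ hlt).false e

theorem stmt8_general {V : Type*} (G : SimpleGraph V)
    (c : ℕ) (hch : ChordalityAtMost G c)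
    (s t : V)
    (S : Set V) (hS : IsMinimalSep G s t S)
    (u v : V) (hu : u ∈ S) (hv : v ∈ S) (huv : u ≠ v) (hnadj : ¬ G.Adj u v) :
    (∃ p : G.Walk u v, p.IsPath ∧ p.length ≤ (c + 1) / 2 ∧
      ∀ w ∈ p.support, w ≠ u → w ≠ v → w ∈ CompOf G S s) ∨
    (∃ p : G.Walk u v, p.IsPath ∧ p.length ≤ (c + 1) / 2 ∧
      ∀ w ∈ p.support, w ≠ u → w ≠ v → w ∈ CompOf G S t) := by
  obtain ⟨P, hP, hPc, hPs⟩ := hS.exists_isPath_isChordless hu hv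
  obtain ⟨Q, hQ, hQc, hQt⟩ := hS.symm.exists_isPath_isChordless hu hv
  have hcycle := hP.isCycle_append_reverse hQ hPs hQt hS.1.disjoint_compOf huv hnadj
  have hchordless := hPc.append_reverse hQc hPs hQt fun a ha b hb =>
    hS.1.not_adj_of_mem_compOf ha hb
  have hlen := hch.length_le hcycle hchordless
  rw [Walk.length_append, Walk.length_reverse] at hlen
  have interior {p : G.Walk u v} {C : Set V} (h : ∀ x ∈ p.support, x ∈ insert u (insert v C)) :
      ∀ w ∈ p.support, w ≠ u → w ≠ v → w ∈ C := fun w hw hwu hwv => by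
    simpa [hwu, hwv] using h w hw
  by_cases hPlen : P.length ≤ (c + 1) / 2
  · exact .inl ⟨P, hP, hPlen, interior hPs⟩
  · exact .inr ⟨Q, hQ, by omega, interior hQt⟩

theorem stmt8 {V : Type*} [Fintype V] (G : SimpleGraph V)
    (c : ℕ) (hc : 3 ≤ c) (hch : ChordalityAtMost G c)
    (s t : V) (hst : s ≠ t) (hadj : ¬ G.Adj s t)
    (S : Set V) (hS : IsMinimalSep G s t S)
    (u v : V) (hu : u ∈ S) (hv : v ∈ S) (huv : u ≠ v) (hnadj : ¬ G.Adj u v) :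
    (∃ p : G.Walk u v, p.IsPath ∧ p.length ≤ (c + 1) / 2 ∧
      ∀ w ∈ p.support, w ≠ u → w ≠ v → w ∈ CompOf G S s) ∨
    (∃ p : G.Walk u v, p.IsPath ∧ p.length ≤ (c + 1) / 2 ∧
      ∀ w ∈ p.support, w ≠ u → w ≠ v → w ∈ CompOf G S t) :=
  stmt8_general G c hch s t S hS u v hu hv huv hnadj
end
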